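/- For non-negative integers N, i, j, the generating function for partitions of n into distinct parts ≤ 2N, with exactly i odd-indexed odd parts and j even-indexed odd parts, equals q^{2i²−i+2j²+j} (−q²;q²)_{N−i−j} · [N choose i, j]_{q⁴}, where [N choose i,j]_q = (q;q)_N / ((q;q)_i (q;q)_j (q;q)_{N−i−j}), interpreted as 0 when i+j > N. -/

import Mathlib

def IsDistinctPartition (π : List ℕ) : Prop :=
  π.Chain' (· > ·) ∧ ∀ p ∈ π, 0 < p

def IsPartition (π : List ℕ) : Prop :=
  π.Chain' (· ≥ ·) ∧ ∀ p ∈ π, 0 < p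

def oddIdxOdd (π : List ℕ) : ℕ :=
  (π.zipIdx.filter fun p => p.2 % 2 == 0 && p.1 % 2 == 1).length

def evenIdxOdd (π : List ℕ) : ℕ :=
  (π.zipIdx.filter fun p => p.2 % 2 == 1 && p.1 % 2 == 1).length

def bgRank (π : List ℕ) : ℤ := (oddIdxOdd π : ℤ) - evenIdxOdd π

def altSum : List ℕ → ℤ
  | [] => 0
  | a :: t => (a : ℤ) - altSum t

noncomputable def gaussPoly : ℕ → ℕ → Polynomial ℚ
  | _, 0 => 1
  | 0, _ + 1 => 0
  | m + 1, r + 1 => gaussPoly m r + Polynomial.X ^ (r + 1) * gaussPoly m (r + 1)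

noncomputable def gaussZ (m : ℕ) (r : ℤ) : Polynomial ℚ :=
  if 0 ≤ r then gaussPoly m r.toNat else 0

noncomputable def P (N i j : ℕ) : PowerSeries ℚ :=
  PowerSeries.mk fun n =>
    (Nat.card {π : List ℕ // IsDistinctPartition π ∧ (∀ p ∈ π, p ≤ N) ∧ π.sum = n ∧
      oddIdxOdd π = i ∧ evenIdxOdd π = j} : ℚ)

/-!
A partition into distinct parts `≤ B + 1` either has all parts `≤ B` or starts with `B + 1`, and
removing that part moves every other part by one position, exchanging odd- and even-indexed
positions; hence
`P (B + 1) i j = P B i j + q ^ (B + 1) * P B j (i - [B + 1 odd])`, and two such steps express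
`P (2N + 2)` through `P (2N)`. The closed form satisfies the same recursion. Write
`N + 1 = i + j + K`. Multiplied by `[i]! [j]! [K]!` (q-factorials in `q⁴`), each trinomial
coefficient occurring in a Pascal step for `[N + 1; i, j]` becomes `[N]!` times a factor `1 - q^(4m)`,
so the two Pascal rules (peeling off the block of size `K` first, resp. the block of size `i` first)
reduce to identities between such factors. The recursion of the closed form is the first rule plus
`q ^ (2K)` times the second, because `(-q²; q²)_K = (-q²; q²)_(K-1) * (1 + q ^ (2K))` and
`q ^ (2K) * q ^ (2K) = (q⁴) ^ K`.
-/

section Gaussian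

open Polynomial

lemma gaussPoly_zero_right (m : ℕ) : gaussPoly m 0 = 1 := by
  cases m <;> rfl

lemma gaussPoly_succ_succ (m r : ℕ) :
    gaussPoly (m + 1) (r + 1) = gaussPoly m r + X ^ (r + 1) * gaussPoly m (r + 1) := rfl

lemma gaussPoly_eq_zero_of_lt {m r : ℕ} (h : m < r) : gaussPoly m r = 0 := by
  induction m generalizing r with
  | zero => obtain ⟨r, rfl⟩ := Nat.exists_eq_add_one.2 h; rfl
  | succ m ih =>
    obtain ⟨r, rfl⟩ := Nat.exists_eq_add_one.2 (Nat.zero_lt_of_lt h)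
    rw [gaussPoly_succ_succ, ih (by omega), ih (by omega), mul_zero, add_zero]

lemma gaussPoly_self (m : ℕ) : gaussPoly m m = 1 := by
  induction m with
  | zero => rfl
  | succ m ih =>
    rw [gaussPoly_succ_succ, ih, gaussPoly_eq_zero_of_lt (Nat.lt_succ_self m), mul_zero, add_zero]

noncomputable def qFactorial (n : ℕ) : ℚ[X] :=
  ∏ k ∈ Finset.range n, (1 - X ^ (k + 1))

lemma qFactorial_succ (n : ℕ) : qFactorial (n + 1) = qFactorial n * (1 - X ^ (n + 1)) :=
  Finset.prod_range_succ _ _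

lemma qFactorial_ne_zero (n : ℕ) : qFactorial n ≠ 0 := by
  refine Finset.prod_ne_zero_iff.2 fun k _ h => ?_
  simpa using congrArg (eval 0) h

lemma gaussPoly_mul_qFactorial (a b : ℕ) :
    gaussPoly (a + b) a * qFactorial a * qFactorial b = qFactorial (a + b) := by
  induction a generalizing b with
  | zero => simp [gaussPoly_zero_right, qFactorial]
  | succ a iha =>
    induction b with
    | zero => simp [gaussPoly_self, qFactorial]
    | succ b ihb =>
      have h := iha (b + 1)
      rw [show a + (b + 1) = a + b + 1 by ring, qFactorial_succ b] at h
      rw [show a + 1 + b = a + b + 1 by ring, qFactorial_succ a] at ihb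
      rw [show a + 1 + (b + 1) = a + b + 1 + 1 by ring, gaussPoly_succ_succ, qFactorial_succ a,
        qFactorial_succ b, qFactorial_succ (a + b + 1)]
      linear_combination (1 - X ^ (a + 1)) * h + X ^ (a + 1) * (1 - X ^ (b + 1)) * ihb

noncomputable def qTrinomial (N i j : ℕ) : ℚ[X] :=
  gaussPoly N i * gaussPoly (N - i) j

lemma qTrinomial_eq_zero {N i j : ℕ} (h : N < i + j) : qTrinomial N i j = 0 := by
  rcases lt_or_ge N i with hi | hi
  · rw [qTrinomial, gaussPoly_eq_zero_of_lt hi, zero_mul]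
  · rw [qTrinomial, gaussPoly_eq_zero_of_lt (by omega : N - i < j), mul_zero]

lemma qTrinomial_mul_qFactorial {N i j : ℕ} (h : i + j ≤ N) :
    qTrinomial N i j * (qFactorial i * qFactorial j * qFactorial (N - i - j)) = qFactorial N := by
  have hi := gaussPoly_mul_qFactorial i (N - i)
  have hj := gaussPoly_mul_qFactorial j (N - i - j)
  rw [Nat.add_sub_cancel' (by omega)] at hi hj
  rw [qTrinomial, ← hi, ← hj]
  ring

lemma qTrinomial_comm (N i j : ℕ) : qTrinomial N i j = qTrinomial N j i := by
  rcases lt_or_ge N (i + j) with h | h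
  · rw [qTrinomial_eq_zero h, qTrinomial_eq_zero (by omega)]
  · refine mul_right_cancel₀ (b := qFactorial i * qFactorial j * qFactorial (N - i - j))
      (by simp [qFactorial_ne_zero]) ?_
    rw [qTrinomial_mul_qFactorial h, show N - i - j = N - j - i by omega,
      ← qTrinomial_mul_qFactorial (by omega : j + i ≤ N)]
    ring

variable {N i j K : ℕ}

lemma qTrinomial_succ_mul_qFactorial (hK : N + 1 = i + j + K) :
    qTrinomial (N + 1) i j * (qFactorial i * qFactorial j * qFactorial K) =
      qFactorial N * (1 - X ^ (i + j + K)) := by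
  rw [← hK, ← qFactorial_succ, ← qTrinomial_mul_qFactorial (by omega : i + j ≤ N + 1),
    show N + 1 - i - j = K by omega]

lemma qTrinomial_mul_qFactorial_of_succ (hK : N + 1 = i + j + K) :
    qTrinomial N i j * (qFactorial i * qFactorial j * qFactorial K) =
      qFactorial N * (1 - X ^ K) := by
  rcases K with _ | K
  · simp [qTrinomial_eq_zero (by omega : N < i + j)]
  · rw [qFactorial_succ, ← qTrinomial_mul_qFactorial (by omega : i + j ≤ N),
      show N - i - j = K by omega]
    ring

lemma ite_qTrinomial_pred_left_mul_qFactorial (hK : N + 1 = i + j + K) :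
    (if i = 0 then 0 else qTrinomial N (i - 1) j) * (qFactorial i * qFactorial j * qFactorial K) =
      qFactorial N * (1 - X ^ i) := by
  rcases i with _ | a
  · simp
  · rw [if_neg (Nat.succ_ne_zero a), Nat.add_sub_cancel, qFactorial_succ,
      ← qTrinomial_mul_qFactorial (by omega : a + j ≤ N), show N - a - j = K by omega]
    ring

lemma ite_qTrinomial_pred_right_mul_qFactorial (hK : N + 1 = i + j + K) :
    (if j = 0 then 0 else qTrinomial N i (j - 1)) * (qFactorial i * qFactorial j * qFactorial K) =
      qFactorial N * (1 - X ^ j) := by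
  rw [qTrinomial_comm, ← ite_qTrinomial_pred_left_mul_qFactorial (by omega : N + 1 = j + i + K)]
  ring

lemma qTrinomial_succ (hK : N + 1 = i + j + K) :
    qTrinomial (N + 1) i j = (if i = 0 then 0 else qTrinomial N (i - 1) j) +
      X ^ i * qTrinomial N i j + X ^ (i + K) * (if j = 0 then 0 else qTrinomial N i (j - 1)) := by
  refine mul_right_cancel₀ (b := qFactorial i * qFactorial j * qFactorial K)
    (by simp [qFactorial_ne_zero]) ?_
  linear_combination qTrinomial_succ_mul_qFactorial hK -
    ite_qTrinomial_pred_left_mul_qFactorial hK - X ^ i * qTrinomial_mul_qFactorial_of_succ hK -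
    X ^ (i + K) * ite_qTrinomial_pred_right_mul_qFactorial hK

lemma qTrinomial_succ' (hK : N + 1 = i + j + K) :
    qTrinomial (N + 1) i j = qTrinomial N i j +
      X ^ K * (if i = 0 then 0 else qTrinomial N (i - 1) j) +
      X ^ (i + K) * (if j = 0 then 0 else qTrinomial N i (j - 1)) := by
  refine mul_right_cancel₀ (b := qFactorial i * qFactorial j * qFactorial K)
    (by simp [qFactorial_ne_zero]) ?_
  linear_combination qTrinomial_succ_mul_qFactorial hK - qTrinomial_mul_qFactorial_of_succ hK -
    X ^ K * ite_qTrinomial_pred_left_mul_qFactorial hK -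
    X ^ (i + K) * ite_qTrinomial_pred_right_mul_qFactorial hK

end Gaussian

lemma pow_mul_pow_of_add_eq {M : Type*} [Monoid M] (x : M) {a b c d : ℕ} (h : a + b = c + d) :
    x ^ a * x ^ b = x ^ c * x ^ d := by
  rw [← pow_add, h, pow_add]

lemma prod_one_add_pow_succ {R : Type*} [CommSemiring R] (q : R) (k : ℕ) :
    ∏ n ∈ Finset.range (k + 1), (1 + q ^ (2 * n + 2)) =
      (∏ n ∈ Finset.range k, (1 + q ^ (2 * n + 2))) * (1 + q ^ (2 * k + 2)) :=
  Finset.prod_range_succ _ _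

section ClosedForm

variable {R : Type*} [CommRing R] [Algebra ℚ R] (q : R)

noncomputable def closedForm (N i j : ℕ) : R :=
  q ^ (2 * i ^ 2 - i + 2 * j ^ 2 + j) * (∏ n ∈ Finset.range (N - i - j), (1 + q ^ (2 * n + 2))) *
    Polynomial.aeval (q ^ 4) (qTrinomial N i j)

lemma closedForm_eq_zero {N i j : ℕ} (h : N < i + j) : closedForm q N i j = 0 := by
  rw [closedForm, qTrinomial_eq_zero h, map_zero, mul_zero]

lemma closedForm_zero (i j : ℕ) : closedForm q 0 i j = if i = 0 ∧ j = 0 then 1 else 0 := by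
  split_ifs with h
  · simp [closedForm, h, qTrinomial, gaussPoly_zero_right]
  · exact closedForm_eq_zero q (by omega)

variable {q} {N i j K : ℕ}

lemma closedForm_succ_eq (hK : N + 1 = i + j + K) :
    closedForm q (N + 1) i j = q ^ (2 * i ^ 2 - i + 2 * j ^ 2 + j) *
      (∏ n ∈ Finset.range K, (1 + q ^ (2 * n + 2))) *
        Polynomial.aeval (q ^ 4) (qTrinomial (N + 1) i j) := by
  rw [closedForm, show N + 1 - i - j = K by omega]

lemma pow_mul_closedForm_swap (hK : N + 1 = i + j + K) :
    q ^ (2 * N + 2) * closedForm q N j i = q ^ (2 * K + 4 * i) * closedForm q N i j := by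
  have : i ≤ 2 * i ^ 2 := by nlinarith
  have : j ≤ 2 * j ^ 2 := by nlinarith
  rw [closedForm, closedForm, qTrinomial_comm, show N - j - i = N - i - j by omega]
  linear_combination (∏ n ∈ Finset.range (N - i - j), (1 + q ^ (2 * n + 2))) *
    Polynomial.aeval (q ^ 4) (qTrinomial N i j) * pow_mul_pow_of_add_eq q (by omega :
      2 * N + 2 + (2 * j ^ 2 - j + 2 * i ^ 2 + i) = 2 * K + 4 * i + (2 * i ^ 2 - i + 2 * j ^ 2 + j))

lemma ite_pow_mul_closedForm_pred_left (hK : N + 1 = i + j + K) :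
    (if i = 0 then 0 else q ^ (2 * N + 1) * closedForm q N j (i - 1)) =
      q ^ (2 * K) * (q ^ (2 * i ^ 2 - i + 2 * j ^ 2 + j) *
        (∏ n ∈ Finset.range K, (1 + q ^ (2 * n + 2))) *
          Polynomial.aeval (q ^ 4) (if i = 0 then 0 else qTrinomial N (i - 1) j)) := by
  rcases i with _ | a
  · simp
  have : a ≤ 2 * a ^ 2 := by nlinarith
  have : j ≤ 2 * j ^ 2 := by nlinarith
  have : (a + 1) ^ 2 = a ^ 2 + 2 * a + 1 := by ring
  simp only [Nat.succ_ne_zero, if_false, Nat.add_sub_cancel]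
  rw [closedForm, qTrinomial_comm, show N - j - a = K by omega]
  linear_combination (∏ n ∈ Finset.range K, (1 + q ^ (2 * n + 2))) *
    Polynomial.aeval (q ^ 4) (qTrinomial N a j) * pow_mul_pow_of_add_eq q (by omega :
      2 * N + 1 + (2 * j ^ 2 - j + 2 * a ^ 2 + a) =
        2 * K + (2 * (a + 1) ^ 2 - (a + 1) + 2 * j ^ 2 + j))

lemma pow_mul_ite_pow_mul_closedForm_pred_right (hK : N + 1 = i + j + K) :
    q ^ (2 * N + 2) * (if j = 0 then 0 else q ^ (2 * N + 1) * closedForm q N i (j - 1)) =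
      q ^ (4 * (i + K)) * (q ^ (2 * i ^ 2 - i + 2 * j ^ 2 + j) *
        (∏ n ∈ Finset.range K, (1 + q ^ (2 * n + 2))) *
          Polynomial.aeval (q ^ 4) (if j = 0 then 0 else qTrinomial N i (j - 1))) := by
  rcases j with _ | b
  · simp
  have : i ≤ 2 * i ^ 2 := by nlinarith
  have : (b + 1) ^ 2 = b ^ 2 + 2 * b + 1 := by ring
  simp only [Nat.succ_ne_zero, if_false, Nat.add_sub_cancel]
  rw [closedForm, show N - i - b = K by omega, ← mul_assoc, ← pow_add]
  linear_combination (∏ n ∈ Finset.range K, (1 + q ^ (2 * n + 2))) *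
    Polynomial.aeval (q ^ 4) (qTrinomial N i b) * pow_mul_pow_of_add_eq q (by omega :
      2 * N + 2 + (2 * N + 1) + (2 * i ^ 2 - i + 2 * b ^ 2 + b) =
        4 * (i + K) + (2 * i ^ 2 - i + 2 * (b + 1) ^ 2 + (b + 1)))

variable (q) in
lemma closedForm_succ (N i j : ℕ) :
    closedForm q (N + 1) i j = closedForm q N i j +
      (if i = 0 then 0 else q ^ (2 * N + 1) * closedForm q N j (i - 1)) +
      q ^ (2 * N + 2) * (closedForm q N j i +
        (if j = 0 then 0 else q ^ (2 * N + 1) * closedForm q N i (j - 1))) := by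
  rcases lt_or_ge (N + 1) (i + j) with h | h
  · have hi : (if i = 0 then 0 else q ^ (2 * N + 1) * closedForm q N j (i - 1)) = 0 := by
      split_ifs
      · rfl
      · rw [closedForm_eq_zero q (by omega), mul_zero]
    have hj : (if j = 0 then 0 else q ^ (2 * N + 1) * closedForm q N i (j - 1)) = 0 := by
      split_ifs
      · rfl
      · rw [closedForm_eq_zero q (by omega), mul_zero]
    rw [hi, hj, closedForm_eq_zero q h, closedForm_eq_zero q (by omega : N < i + j),
      closedForm_eq_zero q (by omega : N < j + i)]
    ring
  obtain ⟨K, hK⟩ : ∃ K, N + 1 = i + j + K := ⟨N + 1 - i - j, by omega⟩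
  have hA := congrArg (Polynomial.aeval (q ^ 4)) (qTrinomial_succ hK)
  have hB := congrArg (Polynomial.aeval (q ^ 4)) (qTrinomial_succ' hK)
  simp only [map_add, map_mul, map_pow, Polynomial.aeval_X] at hA hB
  rw [mul_add, pow_mul_closedForm_swap hK, ite_pow_mul_closedForm_pred_left hK,
    pow_mul_ite_pow_mul_closedForm_pred_right hK, closedForm_succ_eq hK, closedForm]
  rcases K with _ | k
  · rw [qTrinomial_eq_zero (by omega : N < i + j)] at hA ⊢
    simp only [map_zero, mul_zero, add_zero, Finset.range_zero, Finset.prod_empty,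
      pow_zero] at hA ⊢
    linear_combination q ^ (2 * i ^ 2 - i + 2 * j ^ 2 + j) * hA
  · rw [show N - i - j = k by omega, prod_one_add_pow_succ]
    linear_combination q ^ (2 * i ^ 2 - i + 2 * j ^ 2 + j) *
      (∏ n ∈ Finset.range k, (1 + q ^ (2 * n + 2))) * (hB + q ^ (2 * k + 2) * hA)

end ClosedForm

open PowerSeries

lemma oddIdxOdd_cons (a : ℕ) (l : List ℕ) :
    oddIdxOdd (a :: l) = (if a % 2 = 1 then 1 else 0) + evenIdxOdd l := by
  simp only [oddIdxOdd, evenIdxOdd, List.zipIdx_cons, List.zipIdx_succ, List.filter_cons,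
    List.filter_map, Function.comp_def]
  rw [List.filter_congr (q := fun p => p.2 % 2 == 1 && p.1 % 2 == 1) fun x _ => by
    rcases Nat.mod_two_eq_zero_or_one x.2 with h | h <;> simp [Nat.add_mod, h]]
  split_ifs <;> simp_all [Nat.add_comm]

lemma evenIdxOdd_cons (a : ℕ) (l : List ℕ) : evenIdxOdd (a :: l) = oddIdxOdd l := by
  simp only [oddIdxOdd, evenIdxOdd, List.zipIdx_cons, List.zipIdx_succ, List.filter_cons,
    List.filter_map, Function.comp_def]
  rw [List.filter_congr (q := fun p => p.2 % 2 == 0 && p.1 % 2 == 1) fun x _ => by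
    rcases Nat.mod_two_eq_zero_or_one x.2 with h | h <;> simp [Nat.add_mod, h]]
  simp

lemma isDistinctPartition_iff {π : List ℕ} :
    IsDistinctPartition π ↔ π.Pairwise (· > ·) ∧ ∀ p ∈ π, 0 < p :=
  and_congr_left' List.isChain_iff_pairwise

lemma isDistinctPartition_cons {a : ℕ} {l : List ℕ} :
    IsDistinctPartition (a :: l) ↔ IsDistinctPartition l ∧ 0 < a ∧ ∀ p ∈ l, p < a := by
  simp only [isDistinctPartition_iff, List.pairwise_cons, List.mem_cons, forall_eq_or_imp]
  tauto

def distinctPartitions : ℕ → Finset (List ℕ)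
  | 0 => {[]}
  | B + 1 => distinctPartitions B ∪
      (distinctPartitions B).map ⟨List.cons (B + 1), List.cons_injective⟩

lemma mem_distinctPartitions {B : ℕ} {π : List ℕ} :
    π ∈ distinctPartitions B ↔ IsDistinctPartition π ∧ ∀ p ∈ π, p ≤ B := by
  induction B generalizing π with
  | zero =>
    cases π with
    | nil => simp [distinctPartitions, isDistinctPartition_iff]
    | cons a l =>
      simp only [distinctPartitions, Finset.mem_singleton, reduceCtorEq, false_iff,
        isDistinctPartition_cons, List.mem_cons, forall_eq_or_imp]
      omega
  | succ B ih =>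
    cases π with
    | nil => simp [distinctPartitions, ih]
    | cons a l =>
      simp only [distinctPartitions, Finset.mem_union, Finset.mem_map,
        Function.Embedding.coeFn_mk, List.cons.injEq, ih, isDistinctPartition_cons,
        List.mem_cons, forall_eq_or_imp]
      grind

lemma P_eq_sum (B i j : ℕ) :
    P B i j = ∑ π ∈ distinctPartitions B with oddIdxOdd π = i ∧ evenIdxOdd π = j,
      (X : PowerSeries ℚ) ^ π.sum := by
  ext n
  rw [P, coeff_mk, map_sum]
  simp only [coeff_X_pow, Finset.sum_boole, Finset.filter_filter]
  rw [← Nat.card_eq_finsetCard]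
  congr 1
  refine Nat.card_congr (Equiv.subtypeEquivRight fun π => ?_)
  rw [Finset.mem_filter, mem_distinctPartitions]
  tauto

lemma P_zero (i j : ℕ) : P 0 i j = if i = 0 ∧ j = 0 then 1 else 0 := by
  rw [P_eq_sum, distinctPartitions, Finset.filter_singleton]
  split_ifs with h <;> simp_all [oddIdxOdd, evenIdxOdd, eq_comm]

lemma P_succ (B i j : ℕ) :
    P (B + 1) i j = P B i j + X ^ (B + 1) * ∑ l ∈ distinctPartitions B with
      oddIdxOdd ((B + 1) :: l) = i ∧ evenIdxOdd ((B + 1) :: l) = j,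
        (X : PowerSeries ℚ) ^ l.sum := by
  have hdisj : Disjoint (distinctPartitions B)
      ((distinctPartitions B).map ⟨List.cons (B + 1), List.cons_injective⟩) := by
    refine Finset.disjoint_left.2 fun π hπ hπ' => ?_
    obtain ⟨l, -, rfl⟩ := Finset.mem_map.1 hπ'
    have := (mem_distinctPartitions.1 hπ).2 (B + 1) List.mem_cons_self
    omega
  rw [P_eq_sum, P_eq_sum, distinctPartitions, Finset.filter_union, Finset.sum_union
    (Finset.disjoint_filter_filter hdisj), Finset.filter_map, Finset.sum_map, Finset.mul_sum]
  simp only [Function.comp_def, Function.Embedding.coeFn_mk, List.sum_cons, pow_add, mul_assoc]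

lemma P_two_mul_add_one (N i j : ℕ) :
    P (2 * N + 1) i j =
      P (2 * N) i j + if i = 0 then 0 else X ^ (2 * N + 1) * P (2 * N) j (i - 1) := by
  have hodd : (2 * N + 1) % 2 = 1 := by omega
  rw [P_succ]
  simp only [oddIdxOdd_cons, evenIdxOdd_cons, hodd, if_true]
  split_ifs with hi
  · simp [hi]
  · rw [P_eq_sum (2 * N) j (i - 1)]
    congr 2
    exact Finset.sum_congr (Finset.filter_congr fun l _ => by omega) fun _ _ => rfl

lemma P_two_mul_add_two (N i j : ℕ) :
    P (2 * N + 2) i j = P (2 * N + 1) i j + X ^ (2 * N + 2) * P (2 * N + 1) j i := by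
  have heven : (2 * N + 2) % 2 = 0 := by omega
  rw [P_succ, P_eq_sum (2 * N + 1) j i]
  simp only [oddIdxOdd_cons, evenIdxOdd_cons, heven, Nat.zero_ne_one, if_false, zero_add]
  congr 2
  exact Finset.sum_congr (Finset.filter_congr fun l _ => by omega) fun _ _ => rfl

theorem stmt2 (N i j : ℕ) :
    P (2 * N) i j =
      PowerSeries.X ^ (2 * i ^ 2 - i + 2 * j ^ 2 + j) *
        (∏ n ∈ Finset.range (N - i - j), (1 + PowerSeries.X ^ (2 * n + 2))) *
        Polynomial.aeval (PowerSeries.X ^ 4 : PowerSeries ℚ)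
          (gaussPoly N i * gaussPoly (N - i) j) := by
  change P (2 * N) i j = closedForm X N i j
  induction N generalizing i j with
  | zero => rw [Nat.mul_zero, P_zero, closedForm_zero]
  | succ N ih =>
    rw [Nat.mul_succ, P_two_mul_add_two, P_two_mul_add_one, P_two_mul_add_one, closedForm_succ]
    simp only [ih]
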